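/- arXiv:1806.02803 — 4 statements merged into one kernel-verified Lean document; each statement's English description precedes it below -/
import Mathlib

section
/- Let V ≥ 1, N ≥ 0 and let β ∈ (0,1) satisfy the β-condition. Let a and a′ be count vectors. If there exists n ∈ {0,…,N} such that a′_n ≤ a_n − 1 and a′_k ≤ a_k for all k < n, then ∑_{k=0}^{N} β^k a′_k < ∑_{k=0}^{N} β^k a_k. In words: losing one chunk at quality level n cannot be compensated by any gains at quality levels above n. -/
open Finset

lemma sum_range_succ_eq_sum_range_add_add_sum_Ico {M : Type*} [AddCommMonoid M] (f : ℕ → M)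
    {n N : ℕ} (hnN : n ≤ N) :
    ∑ k ∈ range (N + 1), f k = ∑ k ∈ range n, f k + f n + ∑ k ∈ Ico (n + 1) (N + 1), f k := by
  rw [← sum_range_add_sum_Ico f (by omega : n ≤ N + 1), sum_eq_sum_Ico_succ_bot (by omega),
    add_assoc]

theorem weighted_sum_lt_of_loss_at {w x y : ℕ → ℝ} {V : ℝ} {n N : ℕ} (hnN : n ≤ N)
    (hw : ∀ k, 0 ≤ w k) (hx : ∀ k, 0 ≤ x k) (hy : ∀ k ∈ Ico (n + 1) (N + 1), y k ≤ V)
    (hdom : V * ∑ k ∈ Ico (n + 1) (N + 1), w k < w n)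
    (hloss : y n + 1 ≤ x n) (hlow : ∀ k < n, y k ≤ x k) :
    ∑ k ∈ range (N + 1), w k * y k < ∑ k ∈ range (N + 1), w k * x k := by
  rw [sum_range_succ_eq_sum_range_add_add_sum_Ico _ hnN,
    sum_range_succ_eq_sum_range_add_add_sum_Ico _ hnN]
  have hhead : ∑ k ∈ range n, w k * y k ≤ ∑ k ∈ range n, w k * x k :=
    sum_le_sum fun k hk => mul_le_mul_of_nonneg_left (hlow k (mem_range.mp hk)) (hw k)
  have hmid : w n * y n + w n ≤ w n * x n := by
    nlinarith [hw n]
  have htail : ∑ k ∈ Ico (n + 1) (N + 1), w k * y k ≤ V * ∑ k ∈ Ico (n + 1) (N + 1), w k := by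
    rw [mul_sum]
    exact sum_le_sum fun k hk => by nlinarith [hw k, hy k hk]
  have htail_nonneg : 0 ≤ ∑ k ∈ Ico (n + 1) (N + 1), w k * x k :=
    sum_nonneg fun k _ => mul_nonneg (hw k) (hx k)
  linarith

theorem fastscan_level_loss_general (V N : ℕ) (β : ℝ)
    (hβ0 : 0 < β)
    (hbeta : ∀ n ≤ N, (V : ℝ) * ∑ k ∈ Finset.Ico (n + 1) (N + 1), β ^ k < β ^ n)
    (a a' : ℕ → ℕ)
    (ha' : ∀ k ≤ N, a' k ≤ V)
    (h : ∃ n ≤ N, a' n + 1 ≤ a n ∧ ∀ k < n, a' k ≤ a k) :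
    ∑ k ∈ Finset.range (N + 1), β ^ k * (a' k : ℝ) <
      ∑ k ∈ Finset.range (N + 1), β ^ k * (a k : ℝ) := by
  obtain ⟨n, hnN, hloss, hlow⟩ := h
  refine weighted_sum_lt_of_loss_at hnN (fun k => pow_nonneg hβ0.le k) (fun k => Nat.cast_nonneg _)
    (fun k hk => ?_) (hbeta n hnN) (by exact_mod_cast hloss) (fun k hk => ?_)
  · exact_mod_cast ha' k (Nat.lt_succ_iff.mp (mem_Ico.mp hk).2)
  · exact_mod_cast hlow k hk

/-- Under the β-condition, losing one chunk at quality level `n`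
cannot be compensated by any gains at quality levels above `n`. -/
theorem fastscan_level_loss (V N : ℕ) (hV : 1 ≤ V) (β : ℝ)
    (hβ0 : 0 < β) (hβ1 : β < 1)
    (hbeta : ∀ n ≤ N, (V : ℝ) * ∑ k ∈ Finset.Ico (n + 1) (N + 1), β ^ k < β ^ n)
    (a a' : ℕ → ℕ)
    (ha : ∀ k ≤ N, a k ≤ V) (ha' : ∀ k ≤ N, a' k ≤ V)
    (h : ∃ n ≤ N, a' n + 1 ≤ a n ∧ ∀ k < n, a' k ≤ a k) :
    ∑ k ∈ Finset.range (N + 1), β ^ k * (a' k : ℝ) <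
      ∑ k ∈ Finset.range (N + 1), β ^ k * (a k : ℝ) :=
  fastscan_level_loss_general V N β hβ0 hbeta a a' ha' h
end

section
/- Let V ≥ 1, N ≥ 0 and let β ∈ (0,1) satisfy the β-condition. For any two distinct count vectors a and b, ∑_{k=0}^{N} β^k a_k > ∑_{k=0}^{N} β^k b_k if and only if a >_lex b. Hence on count vectors the β-weighted sum ∑_{k=0}^{N} β^k a_k induces exactly the lexicographic order in which lower quality levels are more significant. -/
open Finset

/-- Splitting the sums at the first index `n` where the sequences differ, the tail of `b`
is at most `V * ∑_{k>n} w k < w n`, which the single extra unit of `a n` already exceeds. -/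
theorem weightedSum_lt_of_lex (w : ℕ → ℝ) (hw : ∀ k, 0 ≤ w k) {V N n : ℕ}
    (hdom : (V : ℝ) * ∑ k ∈ Ico (n + 1) (N + 1), w k < w n)
    {a b : ℕ → ℕ} (hb : ∀ k ≤ N, b k ≤ V) (hn : n ≤ N)
    (hlt : b n < a n) (hagree : ∀ k < n, a k = b k) :
    ∑ k ∈ range (N + 1), w k * b k < ∑ k ∈ range (N + 1), w k * a k := by
  have split (c : ℕ → ℕ) : ∑ k ∈ range (N + 1), w k * c k =
      ∑ k ∈ range n, w k * c k + w n * c n + ∑ k ∈ Ico (n + 1) (N + 1), w k * c k := by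
    rw [← sum_range_add_sum_Ico _ (by omega : n ≤ N + 1),
      sum_eq_sum_Ico_succ_bot (by omega : n < N + 1), add_assoc]
  have head : ∑ k ∈ range n, w k * b k = ∑ k ∈ range n, w k * a k :=
    sum_congr rfl fun k hk => by rw [hagree k (mem_range.mp hk)]
  have tail_b : ∑ k ∈ Ico (n + 1) (N + 1), w k * b k ≤ V * ∑ k ∈ Ico (n + 1) (N + 1), w k := by
    rw [mul_sum]
    refine sum_le_sum fun k hk => ?_
    rw [mul_comm]
    exact mul_le_mul_of_nonneg_right
      (by exact_mod_cast hb k (by have := (mem_Ico.mp hk).2; omega)) (hw k)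
  have tail_a : 0 ≤ ∑ k ∈ Ico (n + 1) (N + 1), w k * a k :=
    sum_nonneg fun k _ => mul_nonneg (hw k) (Nat.cast_nonneg _)
  have step : w n * (b n + 1) ≤ w n * a n :=
    mul_le_mul_of_nonneg_left (by exact_mod_cast hlt) (hw n)
  rw [split a, split b, head]
  linarith

theorem exists_first_ne_of_exists_ne {N : ℕ} {a b : ℕ → ℕ} (hne : ∃ k ≤ N, a k ≠ b k) :
    ∃ n ≤ N, a n ≠ b n ∧ ∀ k < n, a k = b k := by
  classical
  obtain ⟨hnN, hn⟩ := Nat.find_spec hne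
  exact ⟨Nat.find hne, hnN, hn, fun k hk => by_contra fun h =>
    Nat.find_min hne hk ⟨by omega, h⟩⟩

theorem fastscan_lex_order_general (V N : ℕ) (β : ℝ)
    (hβ0 : 0 < β)
    (hbeta : ∀ n ≤ N, (V : ℝ) * ∑ k ∈ Finset.Ico (n + 1) (N + 1), β ^ k < β ^ n)
    (a b : ℕ → ℕ)
    (ha : ∀ k ≤ N, a k ≤ V) (hb : ∀ k ≤ N, b k ≤ V)
    (hne : ∃ k ≤ N, a k ≠ b k) :
    (∑ k ∈ Finset.range (N + 1), β ^ k * (a k : ℝ) >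
        ∑ k ∈ Finset.range (N + 1), β ^ k * (b k : ℝ)) ↔
      (∃ n ≤ N, b n < a n ∧ ∀ k < n, a k = b k) := by
  have hw (k : ℕ) : 0 ≤ β ^ k := pow_nonneg hβ0.le k
  constructor
  · intro hsum
    obtain ⟨n, hn, hne_n, hagree⟩ := exists_first_ne_of_exists_ne hne
    refine ⟨n, hn, (Ne.symm hne_n).lt_or_gt.resolve_right fun hba => ?_, hagree⟩
    exact (weightedSum_lt_of_lex _ hw (hbeta n hn) ha hn hba
      fun k hk => (hagree k hk).symm).not_gt hsum
  · rintro ⟨n, hn, hlt, hagree⟩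
    exact weightedSum_lt_of_lex _ hw (hbeta n hn) hb hn hlt hagree

/-- Under the β-condition, for distinct count vectors the
β-weighted sum induces exactly the lexicographic order in which lower quality
levels are more significant. -/
theorem fastscan_lex_order (V N : ℕ) (hV : 1 ≤ V) (β : ℝ)
    (hβ0 : 0 < β) (hβ1 : β < 1)
    (hbeta : ∀ n ≤ N, (V : ℝ) * ∑ k ∈ Finset.Ico (n + 1) (N + 1), β ^ k < β ^ n)
    (a b : ℕ → ℕ)
    (ha : ∀ k ≤ N, a k ≤ V) (hb : ∀ k ≤ N, b k ≤ V)
    (hne : ∃ k ≤ N, a k ≠ b k) :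
    (∑ k ∈ Finset.range (N + 1), β ^ k * (a k : ℝ) >
        ∑ k ∈ Finset.range (N + 1), β ^ k * (b k : ℝ)) ↔
      (∃ n ≤ N, b n < a n ∧ ∀ k < n, a k = b k) :=
  fastscan_lex_order_general V N β hβ0 hbeta a b ha hb hne
end

section
/- Let V ≥ 1, N ≥ 0, let β ∈ (0,1) satisfy the β-condition, and let λ > V · ∑_{n=0}^{N} β^n. Let F be a nonempty finite set of pairs (a,d), where a is a count vector and d ∈ ℕ is a stall duration. Then a pair (a*,d*) ∈ F maximizes the objective f over F if and only if it is sequentially optimal, i.e., d* ≤ d for every (a,d) ∈ F, and a ≤_lex a* for every (a,d) ∈ F with d = d*. In words: maximizing the objective over any finite feasible set is equivalent to first minimizing the stall duration and then lexicographically maximizing the per-level quality counts, processing quality levels in increasing order. -/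
/-!
The weights satisfy `V · ∑_{k>n} β^k < β^n`, so gaining one chunk at level `n` outweighs any
loss at the later levels: on count vectors bounded by `V` the quality value `∑ β^n a_n` is
strictly monotone for the lexicographic order, and hence orders them exactly as that order does.
Since the quality value lies in `[0, V ∑ β^n]` and `λ > V ∑ β^n`, one unit of stall outweighs
every quality difference, so the objective compares stalls first and quality values second.
-/

open Finset

noncomputable def qualityValue (β : ℝ) (N : ℕ) (a : ℕ → ℕ) : ℝ :=
  ∑ k ∈ range (N + 1), β ^ k * (a k : ℝ)

def LexLE (N : ℕ) (b a : ℕ → ℕ) : Prop :=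
  (∀ k ≤ N, b k = a k) ∨ ∃ n ≤ N, b n < a n ∧ ∀ k < n, b k = a k

lemma exists_lt_of_not_lexLE {N : ℕ} {b a : ℕ → ℕ} (h : ¬ LexLE N b a) :
    ∃ n ≤ N, a n < b n ∧ ∀ k < n, a k = b k := by
  classical
  have hdiff : ∃ n, n ≤ N ∧ b n ≠ a n := by
    by_contra! hall
    exact h (Or.inl hall)
  obtain ⟨hnN, hne⟩ := Nat.find_spec hdiff
  have hprefix : ∀ k < Nat.find hdiff, a k = b k := fun k hk =>
    (not_and_not_right.mp (Nat.find_min hdiff hk) (by omega)).symm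
  refine ⟨Nat.find hdiff, hnN, ?_, hprefix⟩
  refine hne.lt_or_gt.resolve_left fun hlt => h (Or.inr ⟨_, hnN, hlt, ?_⟩)
  exact fun k hk => (hprefix k hk).symm

section QualityValue

variable {β : ℝ} {N V : ℕ} {a b : ℕ → ℕ}

lemma qualityValue_nonneg (hβ : 0 ≤ β) (a : ℕ → ℕ) : 0 ≤ qualityValue β N a :=
  sum_nonneg fun k _ => by positivity

lemma qualityValue_le (hβ : 0 ≤ β) (ha : ∀ k ≤ N, a k ≤ V) :
    qualityValue β N a ≤ V * ∑ k ∈ range (N + 1), β ^ k := by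
  rw [qualityValue, mul_sum]
  refine sum_le_sum fun k hk => ?_
  have hak : (a k : ℝ) ≤ V := by exact_mod_cast ha k (by simpa [Nat.lt_succ_iff] using hk)
  nlinarith [pow_nonneg hβ k]

lemma qualityValue_eq_of_eqOn (h : ∀ k ≤ N, b k = a k) :
    qualityValue β N b = qualityValue β N a :=
  sum_congr rfl fun k hk => by rw [h k (by simpa [Nat.lt_succ_iff] using hk)]

lemma qualityValue_split {n : ℕ} (hn : n ≤ N) (a : ℕ → ℕ) :
    qualityValue β N a = (∑ k ∈ range n, β ^ k * (a k : ℝ)) + β ^ n * (a n : ℝ)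
      + ∑ k ∈ Ico (n + 1) (N + 1), β ^ k * (a k : ℝ) := by
  rw [qualityValue, ← sum_range_add_sum_Ico _ (by omega : n ≤ N + 1),
    sum_eq_sum_Ico_succ_bot (by omega : n < N + 1), add_assoc]

lemma qualityValue_lt_of_lex (hβ : 0 ≤ β)
    (hbeta : ∀ n ≤ N, (V : ℝ) * ∑ k ∈ Ico (n + 1) (N + 1), β ^ k < β ^ n)
    (hb : ∀ k ≤ N, b k ≤ V) {n : ℕ} (hn : n ≤ N) (hlt : b n < a n)
    (hprefix : ∀ k < n, b k = a k) :
    qualityValue β N b < qualityValue β N a := by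
  rw [qualityValue_split hn a, qualityValue_split hn b]
  have hhead : ∑ k ∈ range n, β ^ k * (b k : ℝ) = ∑ k ∈ range n, β ^ k * (a k : ℝ) :=
    sum_congr rfl fun k hk => by rw [hprefix k (mem_range.mp hk)]
  have htail_b : ∑ k ∈ Ico (n + 1) (N + 1), β ^ k * (b k : ℝ) ≤
      V * ∑ k ∈ Ico (n + 1) (N + 1), β ^ k := by
    rw [mul_sum]
    refine sum_le_sum fun k hk => ?_
    have hbk : (b k : ℝ) ≤ V := by exact_mod_cast hb k (by have := mem_Ico.mp hk; omega)
    nlinarith [pow_nonneg hβ k]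
  have htail_a : 0 ≤ ∑ k ∈ Ico (n + 1) (N + 1), β ^ k * (a k : ℝ) :=
    sum_nonneg fun k _ => by positivity
  have hlevel : β ^ n * (b n : ℝ) + β ^ n ≤ β ^ n * (a n : ℝ) := by
    have : (b n : ℝ) + 1 ≤ a n := by exact_mod_cast hlt
    nlinarith [pow_nonneg hβ n]
  linarith [hbeta n hn]

lemma qualityValue_le_iff_lexLE (hβ : 0 ≤ β)
    (hbeta : ∀ n ≤ N, (V : ℝ) * ∑ k ∈ Ico (n + 1) (N + 1), β ^ k < β ^ n)
    (ha : ∀ k ≤ N, a k ≤ V) (hb : ∀ k ≤ N, b k ≤ V) :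
    qualityValue β N b ≤ qualityValue β N a ↔ LexLE N b a := by
  refine ⟨fun hle => ?_, ?_⟩
  · by_contra hlex
    obtain ⟨n, hn, hlt, hprefix⟩ := exists_lt_of_not_lexLE hlex
    exact hle.not_gt (qualityValue_lt_of_lex hβ hbeta ha hn hlt hprefix)
  · rintro (heq | ⟨n, hn, hlt, hprefix⟩)
    · exact (qualityValue_eq_of_eqOn heq).le
    · exact (qualityValue_lt_of_lex hβ hbeta hb hn hlt hprefix).le

lemma objective_lt_of_stall_lt {lam : ℝ} (hβ : 0 ≤ β)
    (hlam : lam > (V : ℝ) * ∑ n ∈ range (N + 1), β ^ n) (hb : ∀ k ≤ N, b k ≤ V)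
    {d d' : ℕ} (hd : d < d') (a : ℕ → ℕ) :
    qualityValue β N b - lam * d' < qualityValue β N a - lam * d := by
  have hd' : (d : ℝ) + 1 ≤ d' := by exact_mod_cast hd
  have hlam0 : 0 ≤ lam := le_trans (by positivity) hlam.le
  have := qualityValue_le hβ hb
  have := qualityValue_nonneg hβ (N := N) a
  nlinarith

lemma objective_le_iff {lam : ℝ} (hβ : 0 ≤ β)
    (hbeta : ∀ n ≤ N, (V : ℝ) * ∑ k ∈ Ico (n + 1) (N + 1), β ^ k < β ^ n)
    (hlam : lam > (V : ℝ) * ∑ n ∈ range (N + 1), β ^ n)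
    (ha : ∀ k ≤ N, a k ≤ V) (hb : ∀ k ≤ N, b k ≤ V) {d d' : ℕ} :
    qualityValue β N b - lam * d' ≤ qualityValue β N a - lam * d ↔
      d < d' ∨ d = d' ∧ LexLE N b a := by
  rcases lt_trichotomy d d' with hd | rfl | hd
  · simp only [hd, true_or, iff_true]
    exact (objective_lt_of_stall_lt hβ hlam hb hd a).le
  · simp only [lt_irrefl, false_or, true_and, sub_le_sub_iff_right]
    exact qualityValue_le_iff_lexLE hβ hbeta ha hb
  · simp only [hd.not_gt, hd.ne', false_and, or_self, iff_false, not_le]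
    exact objective_lt_of_stall_lt hβ hlam ha hd b

end QualityValue

theorem fastscan_sequential_optimality_general (V N : ℕ) (β lam : ℝ)
    (hβ0 : 0 < β)
    (hbeta : ∀ n ≤ N, (V : ℝ) * ∑ k ∈ Finset.Ico (n + 1) (N + 1), β ^ k < β ^ n)
    (hlam : lam > (V : ℝ) * ∑ n ∈ Finset.range (N + 1), β ^ n)
    (F : Finset ((ℕ → ℕ) × ℕ))
    (hcount : ∀ p ∈ F, ∀ k ≤ N, p.1 k ≤ V)
    (astar : ℕ → ℕ) (dstar : ℕ) (hmem : (astar, dstar) ∈ F) :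
    (∀ p ∈ F,
        ∑ n ∈ Finset.range (N + 1), β ^ n * (p.1 n : ℝ) - lam * (p.2 : ℝ) ≤
          ∑ n ∈ Finset.range (N + 1), β ^ n * (astar n : ℝ) - lam * (dstar : ℝ)) ↔
      ((∀ p ∈ F, dstar ≤ p.2) ∧
        ∀ p ∈ F, p.2 = dstar →
          ((∀ k ≤ N, p.1 k = astar k) ∨
            ∃ n ≤ N, p.1 n < astar n ∧ ∀ k < n, p.1 k = astar k)) := by
  have hcompare : ∀ p ∈ F, qualityValue β N p.1 - lam * p.2 ≤
      qualityValue β N astar - lam * dstar ↔ dstar < p.2 ∨ dstar = p.2 ∧ LexLE N p.1 astar :=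
    fun p hp => objective_le_iff hβ0.le hbeta hlam (hcount _ hmem) (hcount p hp)
  refine ⟨fun hmax => ⟨fun p hp => ?_, fun p hp hd => ?_⟩, fun ⟨hd, hlex⟩ p hp => ?_⟩
  · rcases (hcompare p hp).mp (hmax p hp) with h | ⟨h, _⟩ <;> omega
  · exact (((hcompare p hp).mp (hmax p hp)).resolve_left (by omega)).2
  · exact (hcompare p hp).mpr ((hd p hp).lt_or_eq.imp id fun h => ⟨h, hlex p hp h.symm⟩)

/-- Under the β-condition and `λ > V · ∑_{n=0}^{N} β^n`,
maximizing the objective `f(a,d) = ∑_{n=0}^{N} β^n a_n − λ d` over any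
nonempty finite feasible set is equivalent to first minimizing the stall
duration and then lexicographically maximizing the per-level quality counts. -/
theorem fastscan_sequential_optimality (V N : ℕ) (hV : 1 ≤ V) (β lam : ℝ)
    (hβ0 : 0 < β) (hβ1 : β < 1)
    (hbeta : ∀ n ≤ N, (V : ℝ) * ∑ k ∈ Finset.Ico (n + 1) (N + 1), β ^ k < β ^ n)
    (hlam : lam > (V : ℝ) * ∑ n ∈ Finset.range (N + 1), β ^ n)
    (F : Finset ((ℕ → ℕ) × ℕ)) (hF : F.Nonempty)
    (hcount : ∀ p ∈ F, ∀ k ≤ N, p.1 k ≤ V)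
    (astar : ℕ → ℕ) (dstar : ℕ) (hmem : (astar, dstar) ∈ F) :
    (∀ p ∈ F,
        ∑ n ∈ Finset.range (N + 1), β ^ n * (p.1 n : ℝ) - lam * (p.2 : ℝ) ≤
          ∑ n ∈ Finset.range (N + 1), β ^ n * (astar n : ℝ) - lam * (dstar : ℝ)) ↔
      ((∀ p ∈ F, dstar ≤ p.2) ∧
        ∀ p ∈ F, p.2 = dstar →
          ((∀ k ≤ N, p.1 k = astar k) ∨
            ∃ n ≤ N, p.1 n < astar n ∧ ∀ k < n, p.1 k = astar k)) :=
  fastscan_sequential_optimality_general V N β lam hβ0 hbeta hlam F hcount astar dstar hmem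
end

section
/- Let V ≥ 1, N ≥ 0 and let β ∈ (0,1) satisfy the β-condition. Fix n ∈ {0,…,N} and let a be the count vector with a_k = V for all k ≤ n and a_k = 0 for all k > n (all V chunks fetched exactly at quality level n). Then for every count vector a′ with a′_n < V, ∑_{k=0}^{N} β^k a′_k < ∑_{k=0}^{N} β^k a_k. In words: the objective prefers pushing all chunks to quality level n over any choice that pushes some chunks above level n at the cost of dropping at least one chunk below level n. -/
/-!
The uniform choice scores `V * ∑_{k ≤ n} β^k`. Any `a'` with `a'_n ≤ V - 1` loses at least
`β^n` on the levels `k ≤ n`, while on the levels above `n` it gains at most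
`V * ∑_{k > n} β^k`, which the β-condition makes smaller than `β^n`.
-/

open Finset

theorem sum_mul_le_mul_sum_of_le {ι R : Type*} [CommSemiring R] [PartialOrder R]
    [IsOrderedRing R] {s : Finset ι} {w x : ι → R} {c : R}
    (hw : ∀ i ∈ s, 0 ≤ w i) (hx : ∀ i ∈ s, x i ≤ c) :
    ∑ i ∈ s, w i * x i ≤ c * ∑ i ∈ s, w i := by
  rw [mul_sum]
  exact sum_le_sum fun i hi => by
    rw [mul_comm c]
    exact mul_le_mul_of_nonneg_left (hx i hi) (hw i hi)

theorem sum_range_succ_pow_mul_le_sub {β V : ℝ} {n : ℕ} {x : ℕ → ℝ} (hβ : 0 ≤ β)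
    (hx : ∀ k < n, x k ≤ V) (hxn : x n + 1 ≤ V) :
    ∑ k ∈ range (n + 1), β ^ k * x k ≤ V * ∑ k ∈ range (n + 1), β ^ k - β ^ n := by
  have hinit : ∑ k ∈ range n, β ^ k * x k ≤ V * ∑ k ∈ range n, β ^ k :=
    sum_mul_le_mul_sum_of_le (fun k _ => pow_nonneg hβ k) fun k hk => hx k (mem_range.1 hk)
  rw [sum_range_succ, sum_range_succ, mul_add]
  nlinarith [pow_nonneg hβ n]

theorem sum_range_pow_mul_of_eq_ite {β : ℝ} {V N n : ℕ} {a : ℕ → ℕ} (hn : n ≤ N)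
    (ha : ∀ k ≤ N, a k = if k ≤ n then V else 0) :
    ∑ k ∈ range (N + 1), β ^ k * (a k : ℝ) = V * ∑ k ∈ range (n + 1), β ^ k := by
  rw [← sum_range_add_sum_Ico _ (by omega : n + 1 ≤ N + 1), mul_sum]
  have htail : ∑ k ∈ Ico (n + 1) (N + 1), β ^ k * (a k : ℝ) = 0 :=
    sum_eq_zero fun k hk => by
      rw [mem_Ico] at hk
      simp [ha k (by omega), show ¬k ≤ n by omega]
  rw [htail, add_zero]
  exact sum_congr rfl fun k hk => by
    rw [mem_range] at hk
    rw [ha k (by omega), if_pos (by omega), mul_comm]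

theorem fastscan_prefers_uniform_level_general (V N : ℕ) (β : ℝ)
    (hβ0 : 0 < β)
    (hbeta : ∀ n ≤ N, (V : ℝ) * ∑ k ∈ Finset.Ico (n + 1) (N + 1), β ^ k < β ^ n)
    (n : ℕ) (hn : n ≤ N)
    (a : ℕ → ℕ) (hadef : ∀ k ≤ N, a k = if k ≤ n then V else 0)
    (a' : ℕ → ℕ) (ha' : ∀ k ≤ N, a' k ≤ V)
    (h : a' n < V) :
    ∑ k ∈ Finset.range (N + 1), β ^ k * (a' k : ℝ) <
      ∑ k ∈ Finset.range (N + 1), β ^ k * (a k : ℝ) := by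
  have hlow : ∑ k ∈ range (n + 1), β ^ k * (a' k : ℝ) ≤
      V * ∑ k ∈ range (n + 1), β ^ k - β ^ n :=
    sum_range_succ_pow_mul_le_sub hβ0.le (fun k hk => by exact_mod_cast ha' k (by omega))
      (by exact_mod_cast h)
  have htail : ∑ k ∈ Ico (n + 1) (N + 1), β ^ k * (a' k : ℝ) ≤
      V * ∑ k ∈ Ico (n + 1) (N + 1), β ^ k :=
    sum_mul_le_mul_sum_of_le (fun k _ => by positivity)
      fun k hk => by exact_mod_cast ha' k (by rw [mem_Ico] at hk; omega)
  rw [← sum_range_add_sum_Ico _ (by omega : n + 1 ≤ N + 1), sum_range_pow_mul_of_eq_ite hn hadef]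
  linarith [hbeta n hn]

/-- Under the β-condition, the objective prefers pushing all `V`
chunks exactly to quality level `n` over any choice whose count at level `n`
is below `V`. -/
theorem fastscan_prefers_uniform_level (V N : ℕ) (hV : 1 ≤ V) (β : ℝ)
    (hβ0 : 0 < β) (hβ1 : β < 1)
    (hbeta : ∀ n ≤ N, (V : ℝ) * ∑ k ∈ Finset.Ico (n + 1) (N + 1), β ^ k < β ^ n)
    (n : ℕ) (hn : n ≤ N)
    (a : ℕ → ℕ) (hadef : ∀ k ≤ N, a k = if k ≤ n then V else 0)
    (a' : ℕ → ℕ) (ha' : ∀ k ≤ N, a' k ≤ V)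
    (h : a' n < V) :
    ∑ k ∈ Finset.range (N + 1), β ^ k * (a' k : ℝ) <
      ∑ k ∈ Finset.range (N + 1), β ^ k * (a k : ℝ) :=
  fastscan_prefers_uniform_level_general V N β hβ0 hbeta n hn a hadef a' ha' h
end
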